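/- For |q| < 1 and a complex with a ≠ 0, and any nonnegative integer n: the sum over pairs (j,k) of nonnegative integers with j + k = n of (a;q)_j (a;q)_k (-1)^k / ((q;q)_j (q;q)_k) equals 0 if n is odd, and equals (a^2; q^2)_m / (q^2; q^2)_m if n = 2m. -/

import Mathlib

open Finset Filter

noncomputable def qp (q x : ℂ) (k : ℕ) : ℂ := ∏ j ∈ Finset.range k, (1 - x * q ^ j)

noncomputable def qpInf (q x : ℂ) : ℂ := ∏' j : ℕ, (1 - x * q ^ j)

noncomputable def qpz (q x : ℂ) (n : ℤ) : ℂ := qpInf q x / qpInf q (x * q ^ n)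

noncomputable def zeta (r : ℕ) : ℂ := Complex.exp (2 * Real.pi * Complex.I / r)

/-!
The q-binomial series `F(x) = ∑ (a;q)_j / (q;q)_j x^j` satisfies `(1 - x) F(x) = (1 - a x) F(q x)`.
Multiplying this equation by its image under `x ↦ -x` shows that `G(x) = F(x) F(-x)`, whose
coefficients are the sums in question, satisfies `(1 - x²) G(x) = (1 - a² x²) G(q x)`. Comparing
coefficients gives `(1 - q^(n+2)) g_(n+2) = (1 - a² q^n) g_n`, and with `g_0 = 1`, `g_1 = 0` this
recursion is solved by the right-hand side.
-/

open PowerSeries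

namespace PowerSeries

variable {R : Type*} [CommRing R]

theorem rescale_comm (a b : R) (f : R⟦X⟧) : rescale a (rescale b f) = rescale b (rescale a f) := by
  rw [rescale_rescale, rescale_rescale, mul_comm]

@[simp]
theorem rescale_C (a c : R) : rescale a (C c) = C c := by
  ext n
  rcases n with _ | n <;> simp [coeff_C]

theorem one_sub_X_sq_mul_mul_rescale_neg_one {F : R⟦X⟧} {c q : R}
    (hF : (1 - X) * F = (1 - C c * X) * rescale q F) :
    (1 - X ^ 2) * (F * rescale (-1) F)
      = (1 - C (c ^ 2) * X ^ 2) * rescale q (F * rescale (-1) F) := by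
  have hF' : (1 + X) * rescale (-1) F = (1 + C c * X) * rescale (-1) (rescale q F) := by
    simpa [rescale_X] using congrArg (rescale (-1 : R)) hF
  calc (1 - X ^ 2) * (F * rescale (-1) F)
      = ((1 - X) * F) * ((1 + X) * rescale (-1) F) := by ring
    _ = ((1 - C c * X) * rescale q F) * ((1 + C c * X) * rescale (-1) (rescale q F)) := by
      rw [hF, hF']
    _ = (1 - C (c ^ 2) * X ^ 2) * rescale q (F * rescale (-1) F) := by
      rw [map_mul, rescale_comm, map_pow]; ring

theorem coeff_add_two_of_one_sub_X_sq_mul {G : R⟦X⟧} {b q : R}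
    (hG : (1 - X ^ 2) * G = (1 - C b * X ^ 2) * rescale q G) (n : ℕ) :
    (1 - q ^ (n + 2)) * coeff (n + 2) G = (1 - b * q ^ n) * coeff n G := by
  have := congrArg (coeff (n + 2)) hG
  simp only [sub_mul, one_mul, map_sub, coeff_X_pow_mul', le_add_iff_nonneg_left, zero_le,
    ↓reduceIte, add_tsub_cancel_right, mul_assoc, coeff_rescale, coeff_C_mul] at this
  linear_combination this

end PowerSeries

theorem qp_succ (q x : ℂ) (k : ℕ) : qp q x (k + 1) = qp q x k * (1 - x * q ^ k) :=
  Finset.prod_range_succ _ _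

theorem qp_self_ne_zero {q : ℂ} (hq : ∀ k, q ^ (k + 1) ≠ 1) (k : ℕ) : qp q q k ≠ 0 :=
  Finset.prod_ne_zero_iff.mpr fun j _ => sub_ne_zero.mpr (by rw [← pow_succ']; exact (hq j).symm)

noncomputable def qBinomialSeries (q a : ℂ) : ℂ⟦X⟧ := mk fun j => qp q a j / qp q q j

theorem one_sub_X_mul_qBinomialSeries {q : ℂ} (hq : ∀ k, q ^ (k + 1) ≠ 1) (a : ℂ) :
    (1 - X) * qBinomialSeries q a = (1 - C a * X) * rescale q (qBinomialSeries q a) := by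
  ext (_ | j)
  · simp only [qBinomialSeries, sub_mul, one_mul, map_sub, mul_assoc, coeff_C_mul,
      coeff_zero_X_mul, coeff_rescale, coeff_mk]
    simp [qp]
  · have hqp := qp_self_ne_zero hq j
    have hj : 1 - q ^ (j + 1) ≠ 0 := sub_ne_zero.mpr (hq j).symm
    simp only [qBinomialSeries, sub_mul, one_mul, map_sub, mul_assoc, coeff_C_mul,
      coeff_succ_X_mul, coeff_rescale, coeff_mk, qp_succ, ← pow_succ']
    field_simp
    ring

theorem coeff_qBinomialSeries_mul_rescale_neg_one_zero (q a : ℂ) :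
    coeff 0 (qBinomialSeries q a * rescale (-1) (qBinomialSeries q a)) = 1 := by
  simp [coeff_mul, qBinomialSeries, qp]

theorem coeff_qBinomialSeries_mul_rescale_neg_one_one (q a : ℂ) :
    coeff 1 (qBinomialSeries q a * rescale (-1) (qBinomialSeries q a)) = 0 := by
  simp [coeff_mul, qBinomialSeries, qp, Finset.Nat.antidiagonal_succ]

theorem eq_ite_of_two_step_recurrence {q b : ℂ} (hq : ∀ k, q ^ (k + 1) ≠ 1) {g : ℕ → ℂ}
    (h0 : g 0 = 1) (h1 : g 1 = 0)
    (hrec : ∀ n, (1 - q ^ (n + 2)) * g (n + 2) = (1 - b * q ^ n) * g n) (n : ℕ) :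
    g n = if 2 ∣ n then qp (q ^ 2) b (n / 2) / qp (q ^ 2) (q ^ 2) (n / 2) else 0 := by
  have hne (n : ℕ) : 1 - q ^ (n + 2) ≠ 0 := sub_ne_zero.mpr (hq (n + 1)).symm
  have hq2 (k : ℕ) : (q ^ 2) ^ (k + 1) ≠ 1 := by rw [← pow_mul]; exact hq (2 * k + 1)
  obtain ⟨m, rfl | rfl⟩ := Nat.even_or_odd' n
  · rw [if_pos (dvd_mul_right 2 m), Nat.mul_div_cancel_left m two_pos]
    induction m with
    | zero => simp [h0, qp]
    | succ m ih =>
      have hqp := qp_self_ne_zero hq2 m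
      have h := hrec (2 * m)
      rw [ih] at h
      rw [qp_succ, qp_succ, ← pow_succ', ← pow_mul, ← pow_mul, mul_add_one]
      field_simp [hne (2 * m)] at h ⊢
      linear_combination h
  · rw [if_neg (by omega)]
    induction m with
    | zero => exact h1
    | succ m ih =>
      have h := hrec (2 * m + 1)
      rw [ih, mul_zero] at h
      exact (mul_eq_zero.mp h).resolve_left (hne _)

theorem stmt3_general (q a : ℂ) (hq : ‖q‖ < 1) (n : ℕ) :
    ∑ p ∈ Finset.HasAntidiagonal.antidiagonal n,
        qp q a p.1 * qp q a p.2 * (-1 : ℂ) ^ p.2 / (qp q q p.1 * qp q q p.2)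
      = if 2 ∣ n then qp (q ^ 2) (a ^ 2) (n / 2) / qp (q ^ 2) (q ^ 2) (n / 2) else 0 := by
  have hq' (k : ℕ) : q ^ (k + 1) ≠ 1 := fun h => by
    simpa [← norm_pow, h] using pow_lt_one₀ (norm_nonneg q) hq k.succ_ne_zero
  have hsum : ∑ p ∈ Finset.HasAntidiagonal.antidiagonal n,
        qp q a p.1 * qp q a p.2 * (-1 : ℂ) ^ p.2 / (qp q q p.1 * qp q q p.2)
      = coeff n (qBinomialSeries q a * rescale (-1) (qBinomialSeries q a)) := by
    rw [coeff_mul]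
    refine Finset.sum_congr rfl fun p _ => ?_
    simp only [qBinomialSeries, coeff_rescale, coeff_mk]
    ring
  rw [hsum]
  exact eq_ite_of_two_step_recurrence hq'
    (g := fun k => coeff k (qBinomialSeries q a * rescale (-1) (qBinomialSeries q a)))
    (coeff_qBinomialSeries_mul_rescale_neg_one_zero q a)
    (coeff_qBinomialSeries_mul_rescale_neg_one_one q a)
    (coeff_add_two_of_one_sub_X_sq_mul
      (one_sub_X_sq_mul_mul_rescale_neg_one (one_sub_X_mul_qBinomialSeries hq' a))) n

theorem stmt3 (q a : ℂ) (hq : ‖q‖ < 1) (ha : a ≠ 0) (n : ℕ) :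
    ∑ p ∈ Finset.HasAntidiagonal.antidiagonal n,
        qp q a p.1 * qp q a p.2 * (-1 : ℂ) ^ p.2 / (qp q q p.1 * qp q q p.2)
      = if 2 ∣ n then qp (q ^ 2) (a ^ 2) (n / 2) / qp (q ^ 2) (q ^ 2) (n / 2) else 0 :=
  stmt3_general q a hq n
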